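/- arXiv:1802.09279 — 6 statements merged into one kernel-verified Lean document; each statement's English description precedes it below -/
import Mathlib

section
/- Let b > 1 and M > ζ(b) be real numbers, let σ₁, σ₂, σ₃ > 0, δ > 0, c₀ ≥ 0 be real numbers, let ε ∈ ℂ with ε ≠ 0, and let H = {z ∈ ℂ : c ≤ Im z ≤ d, Re z ≤ 0} be a closed horizontal strip. Suppose (v_β)_{β≥0} is a sequence of functions v_β : ℂ → ℂ such that for all β ≥ 0 and all τ ∈ H, |v_β(τ)| ≤ c₀ |τ| exp((σ₁/|ε|) r_b(β) |τ| − σ₂ s_b(β) exp(σ₃ |τ|)) · β! · δ^{−β}. Then for every real number 0 < δ₁ < 1, every τ ∈ H and every z ∈ ℂ with |z| ≤ δ₁ δ, the series Σ_{β≥0} v_β(τ) z^β/β! converges absolutely and Σ_{β≥0} |v_β(τ)| |z|^β/β! ≤ (c₀/(1−δ₁)) |τ| exp((σ₁/|ε|) ζ(b) |τ| − σ₂ (M − ζ(b)) exp(σ₃ |τ|)). -/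
/-- `r_b(β) = Σ_{n=0}^{β} 1/(n+1)^b`. -/
noncomputable def rb (b : ℝ) (β : ℕ) : ℝ := ∑ n ∈ Finset.range (β + 1), 1 / ((n : ℝ) + 1) ^ b

/-- `ζ(b) = Σ_{n=0}^{∞} 1/(n+1)^b`. -/
noncomputable def zetab (b : ℝ) : ℝ := ∑' n : ℕ, 1 / ((n : ℝ) + 1) ^ b

/-- The closed horizontal strip `{z : c ≤ Im z ≤ d, Re z ≤ 0}`. -/
def strip (c d : ℝ) : Set ℂ := {z : ℂ | c ≤ z.im ∧ z.im ≤ d ∧ z.re ≤ 0}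

/-!
The hypothesis on `v_β` is a Cauchy-type estimate with radius `δ`, so on the smaller disc
`|z| ≤ δ₁ δ` the terms `|v_β(τ)| |z|^β / β!` are dominated by `c₀ |τ| w(r_b(β)) δ₁^β`, where
`w(r) = exp((σ₁/|ε|) r |τ| - σ₂ (M - r) exp(σ₃ |τ|))` is increasing in `r`. Since
`r_b(β) ≤ ζ(b)`, summing the geometric majorant gives the bound with `w(ζ(b))` and the factor
`1/(1 - δ₁)`.
-/

lemma summable_one_div_nat_add_one_rpow {b : ℝ} (hb : 1 < b) :
    Summable (fun n : ℕ => 1 / ((n : ℝ) + 1) ^ b) := by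
  simpa [Nat.cast_add] using (summable_nat_add_iff 1).mpr (Real.summable_one_div_nat_rpow.mpr hb)

lemma rb_le_zetab {b : ℝ} (hb : 1 < b) (β : ℕ) : rb b β ≤ zetab b :=
  (summable_one_div_nat_add_one_rpow hb).sum_le_tsum _ (fun _ _ => by positivity)

lemma exp_affine_weight_mono {p q A e M r s : ℝ} (hp : 0 ≤ p) (hq : 0 ≤ q) (hA : 0 ≤ A)
    (he : 0 ≤ e) (hrs : r ≤ s) :
    Real.exp (p * r * A - q * (M - r) * e) ≤ Real.exp (p * s * A - q * (M - s) * e) := by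
  gcongr

lemma mul_pow_div_factorial_le_of_le {a r K δ δ₁ : ℝ} {n : ℕ} (ha₀ : 0 ≤ a)
    (ha : a ≤ K * n.factorial / δ ^ n) (hr₀ : 0 ≤ r) (hr : r ≤ δ₁ * δ) (hδ : 0 < δ) :
    a * r ^ n / n.factorial ≤ K * δ₁ ^ n := by
  have hfac : (0 : ℝ) < n.factorial := by exact_mod_cast n.factorial_pos
  calc a * r ^ n / n.factorial
      ≤ K * n.factorial / δ ^ n * (δ₁ * δ) ^ n / n.factorial := by
        gcongr
        exact ha₀.trans ha
    _ = K * δ₁ ^ n := by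
        field_simp
        ring

lemma summable_and_tsum_le_of_le_geometric {f : ℕ → ℝ} {C q : ℝ} (hf : ∀ n, 0 ≤ f n)
    (hq₀ : 0 ≤ q) (hq₁ : q < 1) (hle : ∀ n, f n ≤ C * q ^ n) :
    Summable f ∧ ∑' n, f n ≤ C / (1 - q) := by
  have hgeo : Summable (fun n => C * q ^ n) := (summable_geometric_of_lt_one hq₀ hq₁).mul_left C
  have hsum : Summable f := .of_nonneg_of_le hf hle hgeo
  refine ⟨hsum, ?_⟩
  calc ∑' n, f n ≤ ∑' n, C * q ^ n := hsum.tsum_le_tsum hle hgeo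
    _ = C / (1 - q) := by rw [tsum_mul_left, tsum_geometric_of_lt_one hq₀ hq₁, div_eq_mul_inv]

theorem stmt1_general (b M : ℝ) (hb : 1 < b)
    (σ₁ σ₂ σ₃ δ c₀ : ℝ) (hσ₁ : 0 < σ₁) (hσ₂ : 0 < σ₂) (hδ : 0 < δ)
    (hc₀ : 0 ≤ c₀) (ε : ℂ) (c d : ℝ)
    (v : ℕ → ℂ → ℂ)
    (hv : ∀ (β : ℕ), ∀ τ ∈ strip c d,
      ‖v β τ‖ ≤ c₀ * ‖τ‖ *
        Real.exp (σ₁ / ‖ε‖ * rb b β * ‖τ‖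
          - σ₂ * (M - rb b β) * Real.exp (σ₃ * ‖τ‖)) * (β.factorial : ℝ) / δ ^ β) :
    ∀ δ₁ : ℝ, 0 < δ₁ → δ₁ < 1 → ∀ τ ∈ strip c d, ∀ z : ℂ, ‖z‖ ≤ δ₁ * δ →
      Summable (fun β : ℕ => ‖v β τ‖ * ‖z‖ ^ β / (β.factorial : ℝ)) ∧
      ∑' β : ℕ, ‖v β τ‖ * ‖z‖ ^ β / (β.factorial : ℝ) ≤
        c₀ / (1 - δ₁) * ‖τ‖ *
          Real.exp (σ₁ / ‖ε‖ * zetab b * ‖τ‖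
            - σ₂ * (M - zetab b) * Real.exp (σ₃ * ‖τ‖)) := by
  intro δ₁ hδ₁ hδ₁_lt τ hτ z hz
  have hterm : ∀ β : ℕ, ‖v β τ‖ * ‖z‖ ^ β / β.factorial ≤
      c₀ * ‖τ‖ * Real.exp (σ₁ / ‖ε‖ * zetab b * ‖τ‖
        - σ₂ * (M - zetab b) * Real.exp (σ₃ * ‖τ‖)) * δ₁ ^ β := by
    intro β
    refine (mul_pow_div_factorial_le_of_le (norm_nonneg _) (hv β τ hτ) (norm_nonneg z) hz
      hδ).trans ?_
    gcongr c₀ * ‖τ‖ * ?_ * _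
    exact exp_affine_weight_mono (by positivity) hσ₂.le (norm_nonneg τ) (Real.exp_nonneg _)
      (rb_le_zetab hb β)
  obtain ⟨hsum, hle⟩ := summable_and_tsum_le_of_le_geometric (fun β => by positivity)
    hδ₁.le hδ₁_lt hterm
  refine ⟨hsum, hle.trans_eq ?_⟩
  ring

theorem stmt1 (b M : ℝ) (hb : 1 < b) (hM : zetab b < M)
    (σ₁ σ₂ σ₃ δ c₀ : ℝ) (hσ₁ : 0 < σ₁) (hσ₂ : 0 < σ₂) (hσ₃ : 0 < σ₃) (hδ : 0 < δ)
    (hc₀ : 0 ≤ c₀) (ε : ℂ) (hε : ε ≠ 0) (c d : ℝ) (hcd : c < d)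
    (v : ℕ → ℂ → ℂ)
    (hv : ∀ (β : ℕ), ∀ τ ∈ strip c d,
      ‖v β τ‖ ≤ c₀ * ‖τ‖ *
        Real.exp (σ₁ / ‖ε‖ * rb b β * ‖τ‖
          - σ₂ * (M - rb b β) * Real.exp (σ₃ * ‖τ‖)) * (β.factorial : ℝ) / δ ^ β) :
    ∀ δ₁ : ℝ, 0 < δ₁ → δ₁ < 1 → ∀ τ ∈ strip c d, ∀ z : ℂ, ‖z‖ ≤ δ₁ * δ →
      Summable (fun β : ℕ => ‖v β τ‖ * ‖z‖ ^ β / (β.factorial : ℝ)) ∧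
      ∑' β : ℕ, ‖v β τ‖ * ‖z‖ ^ β / (β.factorial : ℝ) ≤
        c₀ / (1 - δ₁) * ‖τ‖ *
          Real.exp (σ₁ / ‖ε‖ * zetab b * ‖τ‖
            - σ₂ * (M - zetab b) * Real.exp (σ₃ * ‖τ‖)) :=
  stmt1_general b M hb σ₁ σ₂ σ₃ δ c₀ hσ₁ hσ₂ hδ hc₀ ε c d v hv
end

section
/- Let b > 1 and M > ζ(b) be real numbers, σ₁, σ₂, σ₃ > 0 real numbers, k₀, k₂ ≥ 0 and k₁ ≥ 1 integers, and let H = {z ∈ ℂ : c ≤ Im z ≤ d, Re z ≤ 0} be a closed horizontal strip. Then there exists a constant C > 0, depending only on k₀, k₁, k₂, σ₁, σ₂, σ₃ and b (independent of ε, β and v), such that for every ε ∈ ℂ with ε ≠ 0, every integer β ≥ k₁, every real N ≥ 0 and every function v : ℂ → ℂ satisfying |v(τ)| ≤ N |τ| exp((σ₁/|ε|) r_b(β−k₁) |τ| − σ₂ s_b(β−k₁) exp(σ₃ |τ|)) for all τ ∈ H, one has |τ^{k₀} exp(−k₂ τ) v(τ)| ≤ C |ε|^{k₀} (β+1)^{b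 k₀ + k₂ b/σ₃} N |τ| exp((σ₁/|ε|) r_b(β) |τ| − σ₂ s_b(β) exp(σ₃ |τ|)) for all τ ∈ H. -/
/-!
Passing from `β - k₁` to `β` raises `r_b` by `δ ≥ (β + 1)^(-b)`, so the target weight exceeds the
given one by the factor `exp ((σ₁ / |ε|) δ |τ| + σ₂ δ exp (σ₃ |τ|))`. This gain absorbs the
polynomial factor, `|τ|^k₀ ≤ (k₀ / σ₁)^k₀ (|ε| / δ)^k₀ exp ((σ₁ / |ε|) δ |τ|)`, and the factor
`|exp (-k₂ τ)| ≤ exp (σ₃ |τ|)^(k₂ / σ₃)`, which is bounded the same way in the variable `exp (σ₃ |τ|)`.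
Both bounds cost powers of `1 / δ ≤ (β + 1)^b`.
-/

open Real

theorem div_rpow_self_pos {p a : ℝ} (hp : 0 ≤ p) (ha : 0 < a) : 0 < (p / a) ^ p := by
  rcases hp.eq_or_lt with rfl | hp
  · simp
  · positivity

theorem rpow_le_div_rpow_mul_exp {p a x : ℝ} (hp : 0 ≤ p) (ha : 0 < a) (hx : 0 ≤ x) :
    x ^ p ≤ (p / a) ^ p * exp (a * x) := by
  rcases hp.eq_or_lt with rfl | hp
  · simpa using one_le_exp (by positivity)
  -- `t ≤ exp t` at `t = a x / p`, raised to the power `p`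
  have hlin : x ≤ p / a * exp (a * x / p) := by
    calc x = p / a * (a * x / p) := by field_simp
      _ ≤ p / a * exp (a * x / p) := by
        gcongr
        linarith [add_one_le_exp (a * x / p)]
  calc x ^ p ≤ (p / a * exp (a * x / p)) ^ p := by gcongr
    _ = (p / a) ^ p * exp (a * x) := by
      rw [mul_rpow (by positivity) (exp_nonneg _), ← exp_mul]
      congr 2
      field_simp

theorem rpow_le_mul_exp_of_inv_le {p σ δ L x : ℝ} (hp : 0 ≤ p) (hσ : 0 < σ) (hδ : 0 < δ)
    (hL : δ⁻¹ ≤ L) (hx : 0 ≤ x) :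
    x ^ p ≤ (p / σ) ^ p * L ^ p * exp (σ * δ * x) := by
  calc x ^ p ≤ (p / (σ * δ)) ^ p * exp (σ * δ * x) :=
        rpow_le_div_rpow_mul_exp hp (by positivity) hx
    _ = (p / σ) ^ p * δ⁻¹ ^ p * exp (σ * δ * x) := by
      rw [← mul_rpow (by positivity) (by positivity), div_mul_eq_div_div, div_eq_mul_inv (p / σ)]
    _ ≤ (p / σ) ^ p * L ^ p * exp (σ * δ * x) := by
      gcongr

theorem pow_mul_exp_le_mul_exp {σ₁ σ₂ σ₃ q e δ L x : ℝ} (k : ℕ) (hσ₁ : 0 < σ₁) (hσ₂ : 0 < σ₂)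
    (hσ₃ : 0 < σ₃) (hq : 0 ≤ q) (he : 0 < e) (hδ : 0 < δ) (hL : δ⁻¹ ≤ L) (hx : 0 ≤ x) :
    x ^ k * exp (q * x) ≤
      (k / σ₁) ^ k * (q / σ₃ / σ₂) ^ (q / σ₃) * e ^ k * L ^ ((k : ℝ) + q / σ₃) *
        exp (σ₁ / e * δ * x + σ₂ * δ * exp (σ₃ * x)) := by
  have hL₀ : 0 < L := (inv_pos.2 hδ).trans_le hL
  have hpow : x ^ k ≤ (k / σ₁) ^ k * (e * L) ^ k * exp (σ₁ * (δ / e) * x) := by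
    have hinv : (δ / e)⁻¹ ≤ e * L := by
      rw [inv_div, div_eq_mul_inv]
      gcongr
    simpa only [rpow_natCast] using
      rpow_le_mul_exp_of_inv_le (Nat.cast_nonneg k) hσ₁ (by positivity) hinv hx
  have hexp : exp (q * x) ≤
      (q / σ₃ / σ₂) ^ (q / σ₃) * L ^ (q / σ₃) * exp (σ₂ * δ * exp (σ₃ * x)) := by
    have hrw : exp (q * x) = exp (σ₃ * x) ^ (q / σ₃) := by
      rw [← exp_mul]
      congr 1
      field_simp
    rw [hrw]
    exact rpow_le_mul_exp_of_inv_le (by positivity) hσ₂ hδ hL (exp_nonneg _)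
  calc x ^ k * exp (q * x)
      ≤ ((k / σ₁) ^ k * (e * L) ^ k * exp (σ₁ * (δ / e) * x)) *
          ((q / σ₃ / σ₂) ^ (q / σ₃) * L ^ (q / σ₃) * exp (σ₂ * δ * exp (σ₃ * x))) := by
        gcongr
    _ = _ := by
      rw [rpow_add hL₀, rpow_natCast, exp_add, mul_pow]
      ring_nf

theorem rb_monotone (b : ℝ) : Monotone (rb b) := fun m n hmn =>
  Finset.sum_le_sum_of_subset_of_nonneg (Finset.range_subset_range.2 (by omega))
    fun _ _ _ => by positivity

theorem inv_rpow_le_rb_sub_rb (b : ℝ) {k β : ℕ} (hk : 1 ≤ k) (hkβ : k ≤ β) :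
    (((β : ℝ) + 1) ^ b)⁻¹ ≤ rb b β - rb b (β - k) := by
  obtain ⟨m, rfl⟩ : ∃ m, β = m + 1 := ⟨β - 1, by omega⟩
  have hlast : rb b (m + 1) = rb b m + ((((m + 1 : ℕ) : ℝ) + 1) ^ b)⁻¹ := by
    rw [rb, Finset.sum_range_succ, one_div]
    rfl
  have := rb_monotone b (show m + 1 - k ≤ m by omega)
  linarith

theorem norm_pow_mul_exp_mul_le (τ w : ℂ) (k m : ℕ) :
    ‖τ ^ k * Complex.exp (-(m : ℂ) * τ) * w‖ ≤ ‖τ‖ ^ k * exp (m * ‖τ‖) * ‖w‖ := by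
  rw [norm_mul, norm_mul, norm_pow, Complex.norm_exp]
  gcongr
  simpa [neg_mul] using mul_le_mul_of_nonneg_left (Complex.re_le_norm (-τ)) (Nat.cast_nonneg m)

theorem exp_gain_mul_exp_weight (r r' : ℝ) {σ₁ σ₂ σ₃ e M x : ℝ} :
    exp (σ₁ / e * (r' - r) * x + σ₂ * (r' - r) * exp (σ₃ * x)) *
        exp (σ₁ / e * r * x - σ₂ * (M - r) * exp (σ₃ * x)) =
      exp (σ₁ / e * r' * x - σ₂ * (M - r') * exp (σ₃ * x)) := by
  rw [← exp_add]
  congr 1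
  ring

theorem stmt4_general (b : ℝ)
    (σ₁ σ₂ σ₃ : ℝ) (hσ₁ : 0 < σ₁) (hσ₂ : 0 < σ₂) (hσ₃ : 0 < σ₃)
    (k₀ k₁ k₂ : ℕ) (hk₁ : 1 ≤ k₁) :
    ∃ C : ℝ, 0 < C ∧ ∀ M : ℝ, zetab b < M → ∀ c d : ℝ, c < d →
      ∀ (ε : ℂ), ε ≠ 0 → ∀ β : ℕ, k₁ ≤ β → ∀ N : ℝ, 0 ≤ N →
      ∀ v : ℂ → ℂ,
        (∀ τ ∈ strip c d, ‖v τ‖ ≤ N * ‖τ‖ *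
          Real.exp (σ₁ / ‖ε‖ * rb b (β - k₁) * ‖τ‖
            - σ₂ * (M - rb b (β - k₁)) * Real.exp (σ₃ * ‖τ‖))) →
        ∀ τ ∈ strip c d,
          ‖τ ^ k₀ * Complex.exp (-(k₂ : ℂ) * τ) * v τ‖ ≤
            C * ‖ε‖ ^ k₀ *
              ((β : ℝ) + 1) ^ (b * (k₀ : ℝ) + (k₂ : ℝ) * b / σ₃) *
              N * ‖τ‖ *
              Real.exp (σ₁ / ‖ε‖ * rb b β * ‖τ‖
                - σ₂ * (M - rb b β) * Real.exp (σ₃ * ‖τ‖)) := by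
  have hC₀ : 0 < (k₀ / σ₁) ^ k₀ := by
    simpa only [rpow_natCast] using div_rpow_self_pos (Nat.cast_nonneg k₀) hσ₁
  have hC₂ : 0 < ((k₂ : ℝ) / σ₃ / σ₂) ^ ((k₂ : ℝ) / σ₃) :=
    div_rpow_self_pos (by positivity) hσ₂
  refine ⟨_, mul_pos hC₀ hC₂, fun M _ c d _ ε hε β hβ N hN v hv τ hτ => ?_⟩
  have hgap := inv_rpow_le_rb_sub_rb b hk₁ hβ
  have hδ : 0 < rb b β - rb b (β - k₁) := lt_of_lt_of_le (by positivity) hgap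
  have hweight := pow_mul_exp_le_mul_exp k₀ hσ₁ hσ₂ hσ₃ (Nat.cast_nonneg k₂)
    (norm_pos_iff.2 hε) hδ (inv_le_of_inv_le₀ (by positivity) hgap) (norm_nonneg τ)
  have hβpow : (((β : ℝ) + 1) ^ b) ^ ((k₀ : ℝ) + k₂ / σ₃) =
      ((β : ℝ) + 1) ^ (b * (k₀ : ℝ) + (k₂ : ℝ) * b / σ₃) := by
    rw [← rpow_mul (by positivity)]
    congr 1
    ring
  calc ‖τ ^ k₀ * Complex.exp (-(k₂ : ℂ) * τ) * v τ‖
      ≤ ‖τ‖ ^ k₀ * exp (k₂ * ‖τ‖) * ‖v τ‖ := norm_pow_mul_exp_mul_le τ (v τ) k₀ k₂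
    _ ≤ ‖τ‖ ^ k₀ * exp (k₂ * ‖τ‖) * (N * ‖τ‖ * exp (σ₁ / ‖ε‖ * rb b (β - k₁) * ‖τ‖
          - σ₂ * (M - rb b (β - k₁)) * exp (σ₃ * ‖τ‖))) := by gcongr; exact hv τ hτ
    _ ≤ _ := by
      grw [hweight, hβpow, ← exp_gain_mul_exp_weight (rb b (β - k₁)) (rb b β)]
      exact le_of_eq (by ring)

/-- The constant `C` depends only on `k₀, k₁, k₂, σ₁, σ₂, σ₃, b`; it is independent of
`M`, the strip, `ε`, `β` and `v`. -/
theorem stmt4 (b : ℝ) (hb : 1 < b)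
    (σ₁ σ₂ σ₃ : ℝ) (hσ₁ : 0 < σ₁) (hσ₂ : 0 < σ₂) (hσ₃ : 0 < σ₃)
    (k₀ k₁ k₂ : ℕ) (hk₁ : 1 ≤ k₁) :
    ∃ C : ℝ, 0 < C ∧ ∀ M : ℝ, zetab b < M → ∀ c d : ℝ, c < d →
      ∀ (ε : ℂ), ε ≠ 0 → ∀ β : ℕ, k₁ ≤ β → ∀ N : ℝ, 0 ≤ N →
      ∀ v : ℂ → ℂ,
        (∀ τ ∈ strip c d, ‖v τ‖ ≤ N * ‖τ‖ *
          Real.exp (σ₁ / ‖ε‖ * rb b (β - k₁) * ‖τ‖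
            - σ₂ * (M - rb b (β - k₁)) * Real.exp (σ₃ * ‖τ‖))) →
        ∀ τ ∈ strip c d,
          ‖τ ^ k₀ * Complex.exp (-(k₂ : ℂ) * τ) * v τ‖ ≤
            C * ‖ε‖ ^ k₀ *
              ((β : ℝ) + 1) ^ (b * (k₀ : ℝ) + (k₂ : ℝ) * b / σ₃) *
              N * ‖τ‖ *
              Real.exp (σ₁ / ‖ε‖ * rb b β * ‖τ‖
                - σ₂ * (M - rb b β) * Real.exp (σ₃ * ‖τ‖)) :=
  stmt4_general b σ₁ σ₂ σ₃ hσ₁ hσ₂ hσ₃ k₀ k₁ k₂ hk₁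
end

section
/- Let b > 1 and σ₁ > 0 and r > 0 be real numbers, let k₀, k₂ ≥ 0 and k₁ ≥ 1 be integers, and let Ω ⊆ ℂ be a set contained in the union {z ∈ ℂ : Re z ≥ 0} ∪ {z ∈ ℂ : |z| ≤ r} (for instance the closure of an unbounded sector contained in the open right half-plane, union the closed disc of radius r about 0). Then there exists a constant C > 0, depending only on k₀, k₁, k₂, σ₁, r and b (independent of ε, β and v), such that for every ε ∈ ℂ with ε ≠ 0, every integer β ≥ k₁, every real N ≥ 0 and every function v : ℂ → ℂ satisfying |v(τ)| ≤ N |τ| exp((σ₁/|ε|) r_b(β−k₁) |τ|) for all τ ∈ Ω, one has |τ^{k₀} exp(−k₂ τ) v(τ)| ≤ C |ε|^{k₀} (β+1)^{b k₀} N |τ| exp((σ₁/|ε|) r_b(β) |τ|) for all τ ∈ Ω. -/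
/-!
The factor `τ ^ k₀` is absorbed by the exponential at the price of the last summand
`1 / (β + 1) ^ b` of `r_b(β)`, which is missing from `r_b(β - k₁)` because `k₁ ≥ 1`: writing
`c = σ₁ / (|ε| (β + 1) ^ b)`, one has `|τ| ^ k₀ ≤ k₀! c⁻ᵏ⁰ exp (c |τ|)`, and
`c⁻ᵏ⁰ = (σ₁⁻¹ |ε| (β + 1) ^ b) ^ k₀` is the growth in the bound. The factor `exp (-k₂ τ)` is
bounded by `1` on the right half-plane and by `exp (k₂ r)` on the disc.
-/

lemma rb_sub_add_inv_rpow_le (b : ℝ) {k β : ℕ} (hk : 1 ≤ k) (hkβ : k ≤ β) :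
    rb b (β - k) + 1 / ((β : ℝ) + 1) ^ b ≤ rb b β := by
  obtain ⟨m, rfl⟩ : ∃ m, β = m + 1 := ⟨β - 1, by omega⟩
  have hmono : rb b (m + 1 - k) ≤ rb b m :=
    Finset.sum_le_sum_of_subset_of_nonneg (Finset.range_subset_range.2 (by omega))
      fun _ _ _ => by positivity
  have hsucc : rb b (m + 1) = rb b m + 1 / ((m + 1 : ℕ) + 1 : ℝ) ^ b := Finset.sum_range_succ _ _
  rw [hsucc]
  linarith

lemma pow_le_factorial_div_pow_mul_exp {c x : ℝ} (hc : 0 < c) (hx : 0 ≤ x) (k : ℕ) :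
    x ^ k ≤ k.factorial / c ^ k * Real.exp (c * x) := by
  have h := Real.pow_div_factorial_le_exp _ (mul_nonneg hc.le hx) k
  rw [div_le_iff₀ (by positivity), mul_pow] at h
  rw [div_mul_eq_mul_div, le_div_iff₀ (by positivity)]
  linarith

lemma norm_exp_neg_mul_le {k r : ℝ} (hk : 0 ≤ k) (hr : 0 ≤ r) {τ : ℂ} (hτ : 0 ≤ τ.re ∨ ‖τ‖ ≤ r) :
    ‖Complex.exp (-(k : ℂ) * τ)‖ ≤ Real.exp (k * r) := by
  have hre : -τ.re ≤ r := by
    rcases hτ with h | h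
    · linarith
    · linarith [neg_abs_le τ.re, Complex.abs_re_le_norm τ]
  rw [Complex.norm_exp, Real.exp_le_exp]
  simpa [neg_mul] using mul_le_mul_of_nonneg_left hre hk

theorem stmt7_general (b σ₁ r : ℝ) (hσ₁ : 0 < σ₁) (hr : 0 < r)
    (k₀ k₁ k₂ : ℕ) (hk₁ : 1 ≤ k₁) :
    ∃ C : ℝ, 0 < C ∧ ∀ Ω : Set ℂ,
      Ω ⊆ {z : ℂ | 0 ≤ z.re} ∪ {z : ℂ | ‖z‖ ≤ r} →
      ∀ (ε : ℂ), ε ≠ 0 → ∀ β : ℕ, k₁ ≤ β → ∀ N : ℝ, 0 ≤ N →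
      ∀ v : ℂ → ℂ,
        (∀ τ ∈ Ω, ‖v τ‖ ≤ N * ‖τ‖ *
          Real.exp (σ₁ / ‖ε‖ * rb b (β - k₁) * ‖τ‖)) →
        ∀ τ ∈ Ω,
          ‖τ ^ k₀ * Complex.exp (-(k₂ : ℂ) * τ) * v τ‖ ≤
            C * ‖ε‖ ^ k₀ * ((β : ℝ) + 1) ^ (b * (k₀ : ℝ)) *
              N * ‖τ‖ *
              Real.exp (σ₁ / ‖ε‖ * rb b β * ‖τ‖) := by
  refine ⟨k₀.factorial / σ₁ ^ k₀ * Real.exp (k₂ * r), by positivity, ?_⟩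
  intro Ω hΩ ε hε β hkβ N hN v hv τ hτ
  set B : ℝ := ((β : ℝ) + 1) ^ b
  have hε' : 0 < ‖ε‖ := norm_pos_iff.2 hε
  have hB : 0 < B := by positivity
  have hc : 0 < σ₁ / ‖ε‖ / B := by positivity
  have hpow := pow_le_factorial_div_pow_mul_exp hc (norm_nonneg τ) k₀
  have hexp : ‖Complex.exp (-(k₂ : ℂ) * τ)‖ ≤ Real.exp (k₂ * r) := by
    simpa using norm_exp_neg_mul_le (Nat.cast_nonneg k₂) hr.le (hΩ hτ)
  have hrb := rb_sub_add_inv_rpow_le b hk₁ hkβ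
  rw [Real.rpow_mul_natCast (by positivity), norm_mul, norm_mul, norm_pow]
  calc ‖τ‖ ^ k₀ * ‖Complex.exp (-(k₂ : ℂ) * τ)‖ * ‖v τ‖
      ≤ k₀.factorial / (σ₁ / ‖ε‖ / B) ^ k₀ * Real.exp (σ₁ / ‖ε‖ / B * ‖τ‖) *
          Real.exp (k₂ * r) * (N * ‖τ‖ * Real.exp (σ₁ / ‖ε‖ * rb b (β - k₁) * ‖τ‖)) := by
        gcongr
        exact hv τ hτ
    _ = k₀.factorial / σ₁ ^ k₀ * Real.exp (k₂ * r) * ‖ε‖ ^ k₀ * B ^ k₀ * N * ‖τ‖ *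
          Real.exp (σ₁ / ‖ε‖ * (rb b (β - k₁) + 1 / B) * ‖τ‖) := by
        rw [mul_add, add_mul, Real.exp_add, div_div, div_pow, mul_pow]
        field_simp
    _ ≤ k₀.factorial / σ₁ ^ k₀ * Real.exp (k₂ * r) * ‖ε‖ ^ k₀ * B ^ k₀ * N * ‖τ‖ *
          Real.exp (σ₁ / ‖ε‖ * rb b β * ‖τ‖) := by
        gcongr

/-- The constant `C` depends only on `k₀, k₁, k₂, σ₁, r, b`; it is independent of the
domain `Ω`, of `ε`, `β` and `v`. -/
theorem stmt7 (b σ₁ r : ℝ) (hb : 1 < b) (hσ₁ : 0 < σ₁) (hr : 0 < r)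
    (k₀ k₁ k₂ : ℕ) (hk₁ : 1 ≤ k₁) :
    ∃ C : ℝ, 0 < C ∧ ∀ Ω : Set ℂ,
      Ω ⊆ {z : ℂ | 0 ≤ z.re} ∪ {z : ℂ | ‖z‖ ≤ r} →
      ∀ (ε : ℂ), ε ≠ 0 → ∀ β : ℕ, k₁ ≤ β → ∀ N : ℝ, 0 ≤ N →
      ∀ v : ℂ → ℂ,
        (∀ τ ∈ Ω, ‖v τ‖ ≤ N * ‖τ‖ *
          Real.exp (σ₁ / ‖ε‖ * rb b (β - k₁) * ‖τ‖)) →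
        ∀ τ ∈ Ω,
          ‖τ ^ k₀ * Complex.exp (-(k₂ : ℂ) * τ) * v τ‖ ≤
            C * ‖ε‖ ^ k₀ * ((β : ℝ) + 1) ^ (b * (k₀ : ℝ)) *
              N * ‖τ‖ *
              Real.exp (σ₁ / ‖ε‖ * rb b β * ‖τ‖) :=
  stmt7_general b σ₁ r hσ₁ hr k₀ k₁ k₂ hk₁
end

section
/- Let b > 1 be a real number, σ₁ > σ₁' > 0 real numbers, and γ₀, γ₁ ≥ 0 integers. Then there exists a constant Č > 0, depending only on γ₀, γ₁, σ₁ and σ₁' (independent of ε, β, τ and v), such that for every ε ∈ ℂ with ε ≠ 0, every integer β ≥ 0, every real N ≥ 0, every τ ∈ ℂ, and every function v : ℂ → ℂ with u ↦ v(uτ) continuous on [0,1] and satisfying |v(uτ)| ≤ N |uτ| exp((σ₁'/|ε|) r_b(β) |uτ|) for all u ∈ [0,1], one has |τ| · | ∫_0^1 (τ − uτ)^{γ₀} (uτ)^{γ₁} v(uτ) · τ du | ≤ Č |ε|^{γ₀+γ₁+2} N |τ| exp((σ₁/|ε|) r_b(β) |τ|). -/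
/-!
On the segment both `τ - uτ` and `uτ` have modulus at most `|τ|`, so the integral is at most
`N |τ|^(γ₀+γ₁+2) exp((σ₁'/|ε|) r_b(β) |τ|)`. The surplus power of `|τ|` is absorbed by the gap
`σ₁ - σ₁'` in the exponent: `x^m ≤ m! e^x` with `x = ((σ₁ - σ₁')/|ε|) |τ|`, and `r_b(β) ≥ 1`.
-/

open Set Real Nat

lemma one_le_rb (b : ℝ) (β : ℕ) : 1 ≤ rb b β := by
  have h := Finset.single_le_sum (f := fun n : ℕ => 1 / ((n : ℝ) + 1) ^ b)
    (fun _ _ => by positivity) (Finset.mem_range_succ_iff.mpr (Nat.zero_le β))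
  simpa [rb] using h

lemma pow_le_factorial_div_pow_mul_exp_s12 {c t : ℝ} (hc : 0 < c) (ht : 0 ≤ t) (m : ℕ) :
    t ^ m ≤ m ! / c ^ m * exp (c * t) := by
  have h := pow_div_factorial_le_exp _ (mul_nonneg hc.le ht) m
  rw [div_le_iff₀ (by positivity), mul_pow] at h
  rw [div_mul_eq_mul_div, le_div_iff₀ (by positivity)]
  linarith

lemma norm_ofReal_mul_le {u : ℝ} (hu : u ∈ Icc (0 : ℝ) 1) (τ : ℂ) : ‖(u : ℂ) * τ‖ ≤ ‖τ‖ := by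
  rw [norm_mul, Complex.norm_real, Real.norm_of_nonneg hu.1]
  exact mul_le_of_le_one_left (norm_nonneg τ) hu.2

lemma norm_sub_ofReal_mul_le {u : ℝ} (hu : u ∈ Icc (0 : ℝ) 1) (τ : ℂ) :
    ‖τ - (u : ℂ) * τ‖ ≤ ‖τ‖ := by
  have h : τ - (u : ℂ) * τ = ((1 - u : ℝ) : ℂ) * τ := by push_cast; ring
  rw [h]
  exact norm_ofReal_mul_le ⟨by linarith [hu.2], by linarith [hu.1]⟩ τ

lemma norm_integral_segment_le {a N : ℝ} (ha : 0 ≤ a) (hN : 0 ≤ N) (γ₀ γ₁ : ℕ) (τ : ℂ)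
    (v : ℂ → ℂ)
    (hv : ∀ u ∈ Icc (0 : ℝ) 1, ‖v ((u : ℂ) * τ)‖ ≤ N * ‖(u : ℂ) * τ‖ * exp (a * ‖(u : ℂ) * τ‖)) :
    ‖∫ u in (0 : ℝ)..1, (τ - (u : ℂ) * τ) ^ γ₀ * ((u : ℂ) * τ) ^ γ₁ * v ((u : ℂ) * τ) * τ‖ ≤
      N * ‖τ‖ ^ (γ₀ + γ₁ + 2) * exp (a * ‖τ‖) := by
  have h := intervalIntegral.norm_integral_le_of_norm_le_const (a := 0) (b := 1)
    (C := N * ‖τ‖ ^ (γ₀ + γ₁ + 2) * exp (a * ‖τ‖))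
    (f := fun u : ℝ => (τ - (u : ℂ) * τ) ^ γ₀ * ((u : ℂ) * τ) ^ γ₁ * v ((u : ℂ) * τ) * τ) ?_
  · simpa using h
  intro u hu
  rw [uIoc_of_le zero_le_one] at hu
  have hu' : u ∈ Icc (0 : ℝ) 1 := Ioc_subset_Icc_self hu
  have hs := norm_ofReal_mul_le hu' τ
  calc ‖(τ - (u : ℂ) * τ) ^ γ₀ * ((u : ℂ) * τ) ^ γ₁ * v ((u : ℂ) * τ) * τ‖
      = ‖τ - (u : ℂ) * τ‖ ^ γ₀ * ‖(u : ℂ) * τ‖ ^ γ₁ * ‖v ((u : ℂ) * τ)‖ * ‖τ‖ := by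
        simp only [norm_mul, norm_pow]
    _ ≤ ‖τ‖ ^ γ₀ * ‖τ‖ ^ γ₁ * (N * ‖τ‖ * exp (a * ‖τ‖)) * ‖τ‖ := by
        gcongr
        · exact norm_sub_ofReal_mul_le hu' τ
        · exact (hv u hu').trans (by gcongr)
    _ = N * ‖τ‖ ^ (γ₀ + γ₁ + 2) * exp (a * ‖τ‖) := by ring

/-- Convolution bound along the segment `[0,τ]`, parametrized by `s = uτ`, `u ∈ [0,1]`.
The constant `Cc` depends only on `γ₀, γ₁, σ₁, σ₁'`; it is independent of `b, ε, β, τ, v`. -/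
theorem stmt12 (σ₁ σ₁' : ℝ) (hσ₁' : 0 < σ₁') (hσ₁ : σ₁' < σ₁) (γ₀ γ₁ : ℕ) :
    ∃ Cc : ℝ, 0 < Cc ∧ ∀ b : ℝ, 1 < b →
      ∀ (ε : ℂ), ε ≠ 0 → ∀ β : ℕ, ∀ N : ℝ, 0 ≤ N → ∀ τ : ℂ,
      ∀ v : ℂ → ℂ,
        ContinuousOn (fun u : ℝ => v ((u : ℂ) * τ)) (Set.Icc 0 1) →
        (∀ u : ℝ, u ∈ Set.Icc (0 : ℝ) 1 →
          ‖v ((u : ℂ) * τ)‖ ≤ N * ‖(u : ℂ) * τ‖ *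
            Real.exp (σ₁' / ‖ε‖ * rb b β * ‖(u : ℂ) * τ‖)) →
        ‖τ‖ * ‖∫ u in (0 : ℝ)..1,
            (τ - (u : ℂ) * τ) ^ γ₀ * ((u : ℂ) * τ) ^ γ₁ * v ((u : ℂ) * τ) * τ‖ ≤
          Cc * ‖ε‖ ^ (γ₀ + γ₁ + 2) * N * ‖τ‖ *
            Real.exp (σ₁ / ‖ε‖ * rb b β * ‖τ‖) := by
  set m := γ₀ + γ₁ + 2
  have hgap : 0 < σ₁ - σ₁' := sub_pos.mpr hσ₁
  refine ⟨m ! / (σ₁ - σ₁') ^ m, by positivity, ?_⟩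
  intro b _ ε hε β N hN τ v _ hv
  have hεpos : 0 < ‖ε‖ := norm_pos_iff.mpr hε
  have hrb := one_le_rb b β
  set t := ‖τ‖
  set c := (σ₁ - σ₁') / ‖ε‖
  have hint := norm_integral_segment_le (by positivity) hN γ₀ γ₁ τ v hv
  have hpow := pow_le_factorial_div_pow_mul_exp_s12 (div_pos hgap hεpos) (norm_nonneg τ) m
  have hexp : c * t + σ₁' / ‖ε‖ * rb b β * t ≤ σ₁ / ‖ε‖ * rb b β * t := by
    have : c * t ≤ c * rb b β * t := by gcongr; exact le_mul_of_one_le_right (by positivity) hrb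
    linarith [show σ₁ / ‖ε‖ * rb b β * t = c * rb b β * t + σ₁' / ‖ε‖ * rb b β * t by ring]
  calc t * ‖∫ u in (0 : ℝ)..1,
          (τ - (u : ℂ) * τ) ^ γ₀ * ((u : ℂ) * τ) ^ γ₁ * v ((u : ℂ) * τ) * τ‖
      ≤ t * (N * t ^ m * exp (σ₁' / ‖ε‖ * rb b β * t)) :=
        mul_le_mul_of_nonneg_left hint (norm_nonneg τ)
    _ ≤ t * (N * (m ! / c ^ m * exp (c * t)) * exp (σ₁' / ‖ε‖ * rb b β * t)) := by gcongr
    _ = m ! / (σ₁ - σ₁') ^ m * ‖ε‖ ^ m * N * t *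
          exp (c * t + σ₁' / ‖ε‖ * rb b β * t) := by
        rw [exp_add, div_pow]; field_simp
    _ ≤ m ! / (σ₁ - σ₁') ^ m * ‖ε‖ ^ m * N * t * exp (σ₁ / ‖ε‖ * rb b β * t) := by gcongr
end

section
/- Let b > 1 and σ₁ > 0 be real numbers and let γ₀, γ₁ ≥ 0 and γ₂ ≥ 1 be integers. Then there exists a constant C > 0, depending only on γ₀, γ₁, γ₂ and σ₁ (independent of ε, β, τ, c and v), such that the following holds: for every ε ∈ ℂ with ε ≠ 0, every integer β ≥ γ₂, every real N ≥ 0, all τ, c ∈ ℂ with |c| ≤ |τ|, and every function v : ℂ → ℂ with u ↦ v(uc) and u ↦ v((1−u)c + uτ) continuous on [0,1], satisfying |v(s)| ≤ N |s| exp((σ₁/|ε|) r_b(β−γ₂) |s|) at every point s = uc and s = (1−u)c + uτ with u ∈ [0,1], one has |τ| · | c ∫_0^1 (τ − uc)^{γ₀} (uc)^{γ₁} v(uc) du + (τ − c) ∫_0^1 (τ − ((1−u)c + uτ))^{γ₀} ((1−u)c + uτ)^{γ₁} v((1−u)c + uτ) du | ≤ C |ε|^{γ₀+γ₁+2} (β+1)^{b(γ₀+γ₁+2)}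 N |τ| exp((σ₁/|ε|) r_b(β) |τ|). -/
/-!
Both pieces of the path stay in the disc of radius `|τ|`, so each integrand is bounded by
`2^γ₀ N |τ|^(γ₀+γ₁+1) exp(σ₁ r_b(β-γ₂) |τ| / |ε|)`. The remaining polynomial factor `|τ|^m`,
`m = γ₀+γ₁+2`, is absorbed by `exp(a |τ|)` with `a = σ₁ / (|ε| (β+1)^b)`, at the price of
`m! / a^m`. Since `γ₂ ≥ 1`, the gap `r_b(β) - r_b(β-γ₂)` contains the term `(β+1)^(-b)`,
so `exp(a |τ|)` fits inside `exp(σ₁ r_b(β) |τ| / |ε|)`.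
-/

open Real Set
open scoped Nat

lemma rb_nonneg (b : ℝ) (β : ℕ) : 0 ≤ rb b β :=
  Finset.sum_nonneg fun _ _ => by positivity

lemma rb_add_inv_rpow_le (b : ℝ) {k β : ℕ} (hk : k < β) :
    rb b k + (((β : ℝ) + 1) ^ b)⁻¹ ≤ rb b β := by
  have hle : rb b k ≤ ∑ n ∈ Finset.range β, 1 / ((n : ℝ) + 1) ^ b :=
    Finset.sum_le_sum_of_subset_of_nonneg (Finset.range_subset_range.2 hk)
      fun _ _ _ => by positivity
  have hsucc : rb b β = ∑ n ∈ Finset.range β, 1 / ((n : ℝ) + 1) ^ b + 1 / ((β : ℝ) + 1) ^ b :=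
    Finset.sum_range_succ _ _
  rw [hsucc, ← one_div]
  linarith

lemma pow_le_factorial_div_pow_mul_exp_s13 (m : ℕ) {a x : ℝ} (ha : 0 < a) (hx : 0 ≤ x) :
    x ^ m ≤ m ! / a ^ m * exp (a * x) := by
  have h := Real.pow_div_factorial_le_exp (a * x) (mul_nonneg ha.le hx) m
  rw [div_le_iff₀ (by positivity)] at h
  rw [div_mul_eq_mul_div, le_div_iff₀ (by positivity)]
  calc x ^ m * a ^ m = (a * x) ^ m := by ring
    _ ≤ exp (a * x) * m ! := h
    _ = m ! * exp (a * x) := mul_comm _ _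

lemma pow_mul_exp_rb_le {σ E T b : ℝ} {k β : ℕ} (m : ℕ) (hσ : 0 < σ) (hE : 0 < E)
    (hT : 0 ≤ T) (hk : k < β) :
    T ^ m * exp (σ / E * rb b k * T) ≤
      m ! / σ ^ m * E ^ m * ((β : ℝ) + 1) ^ (b * m) * exp (σ / E * rb b β * T) := by
  set P := ((β : ℝ) + 1) ^ b
  have hP : 0 < P := by positivity
  have hpow : T ^ m ≤ m ! / σ ^ m * E ^ m * P ^ m * exp (σ / (E * P) * T) := by
    have := pow_le_factorial_div_pow_mul_exp_s13 m (div_pos hσ (mul_pos hE hP)) hT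
    convert this using 2
    rw [div_pow, mul_pow]
    field_simp
  have hgap : σ / (E * P) + σ / E * rb b k ≤ σ / E * rb b β := by
    calc σ / (E * P) + σ / E * rb b k = σ / E * (rb b k + P⁻¹) := by field_simp; ring
      _ ≤ σ / E * rb b β := by gcongr; exact rb_add_inv_rpow_le b hk
  rw [rpow_mul (by positivity), rpow_natCast]
  calc T ^ m * exp (σ / E * rb b k * T)
      ≤ m ! / σ ^ m * E ^ m * P ^ m * exp (σ / (E * P) * T) * exp (σ / E * rb b k * T) := by
        gcongr
    _ = m ! / σ ^ m * E ^ m * P ^ m * exp ((σ / (E * P) + σ / E * rb b k) * T) := by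
        rw [add_mul, exp_add]; ring
    _ ≤ m ! / σ ^ m * E ^ m * P ^ m * exp (σ / E * rb b β * T) := by gcongr

lemma norm_segment_le {c τ : ℂ} {R u : ℝ} (hc : ‖c‖ ≤ R) (hτ : ‖τ‖ ≤ R) (hu : u ∈ Icc (0 : ℝ) 1) :
    ‖(1 - (u : ℂ)) * c + u * τ‖ ≤ R := by
  have := convex_closedBall (0 : ℂ) R (mem_closedBall_zero_iff.2 hc)
    (mem_closedBall_zero_iff.2 hτ) (sub_nonneg.2 hu.2) hu.1 (sub_add_cancel 1 u)
  simpa [Complex.real_smul] using this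

lemma norm_mul_add_sub_mul_le {c τ x y : ℂ} {M : ℝ} (hc : ‖c‖ ≤ ‖τ‖) (hx : ‖x‖ ≤ M)
    (hy : ‖y‖ ≤ M) : ‖c * x + (τ - c) * y‖ ≤ 3 * ‖τ‖ * M := by
  have hM : 0 ≤ M := (norm_nonneg x).trans hx
  have hτc : ‖τ - c‖ ≤ 2 * ‖τ‖ := (norm_sub_le τ c).trans (by linarith)
  calc ‖c * x + (τ - c) * y‖ ≤ ‖c‖ * ‖x‖ + ‖τ - c‖ * ‖y‖ := by
        simpa only [norm_mul] using norm_add_le (c * x) ((τ - c) * y)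
    _ ≤ ‖τ‖ * M + 2 * ‖τ‖ * M := by gcongr
    _ = 3 * ‖τ‖ * M := by ring

section Convolution

variable {τ : ℂ} {N A : ℝ} (γ₀ γ₁ : ℕ)

lemma norm_conv_integrand_le {s w : ℂ} (hN : 0 ≤ N) (hA : 0 ≤ A) (hs : ‖s‖ ≤ ‖τ‖)
    (hw : ‖w‖ ≤ N * ‖s‖ * exp (A * ‖s‖)) :
    ‖(τ - s) ^ γ₀ * s ^ γ₁ * w‖ ≤ 2 ^ γ₀ * N * ‖τ‖ ^ (γ₀ + γ₁ + 1) * exp (A * ‖τ‖) := by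
  have hτs : ‖τ - s‖ ≤ 2 * ‖τ‖ := (norm_sub_le τ s).trans (by linarith)
  have hw' : ‖w‖ ≤ N * ‖τ‖ * exp (A * ‖τ‖) := hw.trans (by gcongr)
  rw [norm_mul, norm_mul, norm_pow, norm_pow]
  calc ‖τ - s‖ ^ γ₀ * ‖s‖ ^ γ₁ * ‖w‖
      ≤ (2 * ‖τ‖) ^ γ₀ * ‖τ‖ ^ γ₁ * (N * ‖τ‖ * exp (A * ‖τ‖)) := by gcongr
    _ = 2 ^ γ₀ * N * ‖τ‖ ^ (γ₀ + γ₁ + 1) * exp (A * ‖τ‖) := by ring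

lemma norm_integral_conv_le {v : ℂ → ℂ} (p : ℝ → ℂ) (hN : 0 ≤ N) (hA : 0 ≤ A)
    (hp : ∀ u ∈ Icc (0 : ℝ) 1, ‖p u‖ ≤ ‖τ‖)
    (hv : ∀ u ∈ Icc (0 : ℝ) 1, ‖v (p u)‖ ≤ N * ‖p u‖ * exp (A * ‖p u‖)) :
    ‖∫ u in (0 : ℝ)..1, (τ - p u) ^ γ₀ * p u ^ γ₁ * v (p u)‖ ≤
      2 ^ γ₀ * N * ‖τ‖ ^ (γ₀ + γ₁ + 1) * exp (A * ‖τ‖) := by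
  have hbound : ∀ u ∈ uIoc (0 : ℝ) 1, ‖(τ - p u) ^ γ₀ * p u ^ γ₁ * v (p u)‖ ≤
      2 ^ γ₀ * N * ‖τ‖ ^ (γ₀ + γ₁ + 1) * exp (A * ‖τ‖) := fun u hu => by
    rw [uIoc_of_le zero_le_one] at hu
    exact norm_conv_integrand_le γ₀ γ₁ hN hA (hp u (Ioc_subset_Icc_self hu))
      (hv u (Ioc_subset_Icc_self hu))
  simpa using intervalIntegral.norm_integral_le_of_norm_le_const hbound

end Convolution

/-- Convolution bound along the piecewise-linear path `L_{0,τ} = [0,c] ∪ [c,τ]` with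
`|c| ≤ |τ|`; the two integrals are parametrized by `s = uc` and `s = (1-u)c + uτ`,
`u ∈ [0,1]`.  The constant `C` depends only on `γ₀, γ₁, γ₂, σ₁`; it is independent of
`b, ε, β, τ, c, v`. -/
theorem stmt13 (σ₁ : ℝ) (hσ₁ : 0 < σ₁) (γ₀ γ₁ γ₂ : ℕ) (hγ₂ : 1 ≤ γ₂) :
    ∃ C : ℝ, 0 < C ∧ ∀ b : ℝ, 1 < b →
      ∀ (ε : ℂ), ε ≠ 0 → ∀ β : ℕ, γ₂ ≤ β → ∀ N : ℝ, 0 ≤ N →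
      ∀ τ c : ℂ, ‖c‖ ≤ ‖τ‖ →
      ∀ v : ℂ → ℂ,
        ContinuousOn (fun u : ℝ => v ((u : ℂ) * c)) (Set.Icc 0 1) →
        ContinuousOn (fun u : ℝ => v ((1 - (u : ℂ)) * c + (u : ℂ) * τ)) (Set.Icc 0 1) →
        (∀ u : ℝ, u ∈ Set.Icc (0 : ℝ) 1 →
          ‖(v ((u : ℂ) * c))‖ ≤ N * ‖((u : ℂ) * c)‖ *
            Real.exp (σ₁ / ‖ε‖ * rb b (β - γ₂) * ‖((u : ℂ) * c)‖)) →
        (∀ u : ℝ, u ∈ Set.Icc (0 : ℝ) 1 →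
          ‖(v ((1 - (u : ℂ)) * c + (u : ℂ) * τ))‖ ≤
            N * ‖((1 - (u : ℂ)) * c + (u : ℂ) * τ)‖ *
              Real.exp (σ₁ / ‖ε‖ * rb b (β - γ₂) *
                ‖((1 - (u : ℂ)) * c + (u : ℂ) * τ)‖)) →
        ‖τ‖ * ‖
            (c * (∫ u in (0 : ℝ)..1,
               (τ - (u : ℂ) * c) ^ γ₀ * ((u : ℂ) * c) ^ γ₁ * v ((u : ℂ) * c))
             + (τ - c) * (∫ u in (0 : ℝ)..1,
               (τ - ((1 - (u : ℂ)) * c + (u : ℂ) * τ)) ^ γ₀ *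
                 ((1 - (u : ℂ)) * c + (u : ℂ) * τ) ^ γ₁ *
                 v ((1 - (u : ℂ)) * c + (u : ℂ) * τ)))‖ ≤
          C * ‖ε‖ ^ (γ₀ + γ₁ + 2) *
            ((β : ℝ) + 1) ^ (b * ((γ₀ + γ₁ + 2 : ℕ) : ℝ)) *
            N * ‖τ‖ *
            Real.exp (σ₁ / ‖ε‖ * rb b β * ‖τ‖) := by
  refine ⟨3 * 2 ^ γ₀ * ((γ₀ + γ₁ + 2)! / σ₁ ^ (γ₀ + γ₁ + 2)), by positivity, ?_⟩
  intro b _ ε hε β hβ N hN τ c hcτ v _ _ hv₁ hv₂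
  have hE : 0 < ‖ε‖ := norm_pos_iff.2 hε
  have hA : 0 ≤ σ₁ / ‖ε‖ * rb b (β - γ₂) := by have := rb_nonneg b (β - γ₂); positivity
  have hI₁ := norm_integral_conv_le γ₀ γ₁ (fun u : ℝ => (u : ℂ) * c) hN hA
    (fun u hu => by simpa using norm_segment_le (norm_zero.trans_le (norm_nonneg τ)) hcτ hu) hv₁
  have hI₂ := norm_integral_conv_le γ₀ γ₁ (fun u : ℝ => (1 - (u : ℂ)) * c + u * τ) hN hA
    (fun u hu => norm_segment_le hcτ le_rfl hu) hv₂
  have habsorb := pow_mul_exp_rb_le (b := b) (γ₀ + γ₁ + 2) hσ₁ hE (norm_nonneg τ)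
    (show β - γ₂ < β by omega)
  calc _ ≤ ‖τ‖ * (3 * ‖τ‖ * (2 ^ γ₀ * N * ‖τ‖ ^ (γ₀ + γ₁ + 1) *
          exp (σ₁ / ‖ε‖ * rb b (β - γ₂) * ‖τ‖))) := by
        gcongr; exact norm_mul_add_sub_mul_le hcτ hI₁ hI₂
    _ = 3 * 2 ^ γ₀ * N * ‖τ‖ * (‖τ‖ ^ (γ₀ + γ₁ + 2) *
          exp (σ₁ / ‖ε‖ * rb b (β - γ₂) * ‖τ‖)) := by ring
    _ ≤ 3 * 2 ^ γ₀ * N * ‖τ‖ * ((γ₀ + γ₁ + 2)! / σ₁ ^ (γ₀ + γ₁ + 2) * ‖ε‖ ^ (γ₀ + γ₁ + 2) *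
          ((β : ℝ) + 1) ^ (b * ((γ₀ + γ₁ + 2 : ℕ) : ℝ)) * exp (σ₁ / ‖ε‖ * rb b β * ‖τ‖)) := by
        gcongr
    _ = _ := by ring
end

section
/- Let a > 0, η ∈ (0, π/2) be real numbers and k ∈ ℤ, and let H_k = {z ∈ ℂ : Re z ≤ 0, π/2 + η + 2kπ ≤ Im z ≤ 3π/2 − η + 2kπ}. Then: (i) for every τ ∈ ℂ, |exp(a · exp(−τ))| = exp(a · cos(Im τ) · exp(−Re τ)); (ii) there exist constants Ω > 0, Δ > 0 and K > 0 such that for all τ ∈ H_k, |exp(a · exp(−τ))| ≤ Ω · exp(−a Δ · exp(K |τ|)). In particular the function w(τ) = τ exp(a exp(−τ)) satisfies |w(τ)| ≤ Ω |τ| exp(−a Δ exp(K |τ|)) on H_k. -/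
open Real

lemma Real.sin_le_sin_of_le_of_le_pi_sub {η u : ℝ} (hη : -(π / 2) ≤ η) (h₁ : η ≤ u)
    (h₂ : u ≤ π - η) : sin η ≤ sin u := by
  rcases le_or_gt u (π / 2) with hu | hu
  · exact sin_le_sin_of_le_of_le_pi_div_two hη hu h₁
  · rw [← sin_pi_sub u]
    exact sin_le_sin_of_le_of_le_pi_div_two hη (by linarith) (by linarith)

lemma Real.cos_le_neg_sin_of_mem_Icc {η y : ℝ} (k : ℤ) (hη : -(π / 2) ≤ η)
    (hlo : π / 2 + η + 2 * k * π ≤ y) (hhi : y ≤ 3 * π / 2 - η + 2 * k * π) :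
    cos y ≤ -sin η := by
  have hshift : cos y = -sin (y - 2 * k * π - π / 2) := by
    rw [← cos_add_pi_div_two, ← cos_sub_int_mul_two_pi y k]
    ring_nf
  rw [hshift, neg_le_neg_iff]
  exact sin_le_sin_of_le_of_le_pi_sub hη (by linarith) (by linarith)

namespace Complex

lemma norm_exp_ofReal_mul_exp_neg (a : ℝ) (τ : ℂ) :
    ‖exp (a * exp (-τ))‖ = Real.exp (a * Real.cos τ.im * Real.exp (-τ.re)) := by
  rw [norm_exp]
  congr 1
  simp only [re_ofReal_mul, exp_re, neg_re, neg_im, Real.cos_neg]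
  ring

lemma norm_le_neg_re_add {τ : ℂ} {M : ℝ} (hre : τ.re ≤ 0) (him : |τ.im| ≤ M) :
    ‖τ‖ ≤ -τ.re + M :=
  calc ‖τ‖ ≤ |τ.re| + |τ.im| := norm_le_abs_re_add_abs_im τ
    _ ≤ -τ.re + M := by rw [abs_of_nonpos hre]; linarith

/-- Doubly exponential decay: on a half-plane strip of bounded height, `exp (-re τ)` is at
least `exp (-M) * exp ‖τ‖`. -/
lemma norm_exp_ofReal_mul_exp_neg_le {a s M : ℝ} {τ : ℂ} (ha : 0 ≤ a) (hs : 0 ≤ s)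
    (hre : τ.re ≤ 0) (him : |τ.im| ≤ M) (hcos : Real.cos τ.im ≤ -s) :
    ‖exp (a * exp (-τ))‖ ≤ Real.exp (-(a * (s * Real.exp (-M))) * Real.exp ‖τ‖) := by
  rw [norm_exp_ofReal_mul_exp_neg, Real.exp_le_exp]
  have hexp : Real.exp (-M) * Real.exp ‖τ‖ ≤ Real.exp (-τ.re) := by
    rw [← Real.exp_add, Real.exp_le_exp]
    linarith [norm_le_neg_re_add hre him]
  calc a * Real.cos τ.im * Real.exp (-τ.re) ≤ a * -s * Real.exp (-τ.re) := by gcongr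
    _ ≤ a * -s * (Real.exp (-M) * Real.exp ‖τ‖) :=
      mul_le_mul_of_nonpos_left hexp (mul_nonpos_of_nonneg_of_nonpos ha (neg_nonpos.2 hs))
    _ = -(a * (s * Real.exp (-M))) * Real.exp ‖τ‖ := by ring

end Complex

theorem stmt19 (a η : ℝ) (ha : 0 < a) (hη0 : 0 < η) (hη : η < Real.pi / 2) (k : ℤ) :
    (∀ τ : ℂ, ‖Complex.exp ((a : ℂ) * Complex.exp (-τ))‖ =
        Real.exp (a * Real.cos τ.im * Real.exp (-τ.re))) ∧
    ∃ Ω Δ K : ℝ, 0 < Ω ∧ 0 < Δ ∧ 0 < K ∧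
      (∀ τ : ℂ, τ.re ≤ 0 →
        Real.pi / 2 + η + 2 * (k : ℝ) * Real.pi ≤ τ.im →
        τ.im ≤ 3 * Real.pi / 2 - η + 2 * (k : ℝ) * Real.pi →
        ‖Complex.exp ((a : ℂ) * Complex.exp (-τ))‖ ≤
          Ω * Real.exp (-(a * Δ) * Real.exp (K * ‖τ‖))) ∧
      (∀ τ : ℂ, τ.re ≤ 0 →
        Real.pi / 2 + η + 2 * (k : ℝ) * Real.pi ≤ τ.im →
        τ.im ≤ 3 * Real.pi / 2 - η + 2 * (k : ℝ) * Real.pi →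
        ‖τ * Complex.exp ((a : ℂ) * Complex.exp (-τ))‖ ≤
          Ω * ‖τ‖ * Real.exp (-(a * Δ) * Real.exp (K * ‖τ‖))) := by
  set M := max |π / 2 + η + 2 * k * π| |3 * π / 2 - η + 2 * k * π|
  have hsin : 0 < sin η := sin_pos_of_pos_of_lt_pi hη0 (by linarith [pi_pos])
  have decay : ∀ τ : ℂ, τ.re ≤ 0 → π / 2 + η + 2 * k * π ≤ τ.im →
      τ.im ≤ 3 * π / 2 - η + 2 * k * π →
      ‖Complex.exp (a * Complex.exp (-τ))‖ ≤
        Real.exp (-(a * (sin η * Real.exp (-M))) * Real.exp ‖τ‖) := fun τ hre hlo hhi =>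
    Complex.norm_exp_ofReal_mul_exp_neg_le ha.le hsin.le hre (abs_le_max_abs_abs hlo hhi)
      (cos_le_neg_sin_of_mem_Icc k (by linarith) hlo hhi)
  refine ⟨Complex.norm_exp_ofReal_mul_exp_neg a, 1, sin η * Real.exp (-M), 1, one_pos,
    mul_pos hsin (Real.exp_pos _), one_pos, fun τ hre hlo hhi => ?_, fun τ hre hlo hhi => ?_⟩
  · simpa only [one_mul] using decay τ hre hlo hhi
  · simpa only [norm_mul, one_mul, mul_assoc] using
      mul_le_mul_of_nonneg_left (decay τ hre hlo hhi) (norm_nonneg τ)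
end
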